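/- arXiv:1401.1894 — 2 statements merged into one kernel-verified Lean document; each statement's English description precedes it below -/
import Mathlib

section
/- If S ⊆ ℕ^ℕ is guessable, then S_∞ = ∅, i.e., there exists an ordinal α with S_α = ∅. -/
open Filter Topology Classical

/-- The initial segment `f↾n` of an infinite sequence. -/
def res (f : ℕ → ℕ) (n : ℕ) : List ℕ := List.ofFn (fun i : Fin n => f i)

/-- `[X]`: the set of infinite sequences all of whose finite initial segments lie in `X`. -/
def seqsIn (X : Set (List ℕ)) : Set (ℕ → ℕ) := {f | ∀ n, res f n ∈ X}

/-- The simplified remainder `S_α`. -/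
noncomputable def SRem (S : Set (ℕ → ℕ)) (α : Ordinal.{0}) : Set (List ℕ) :=
  Ordinal.limitRecOn α Set.univ
    (fun _ prev => {x | x ∈ prev ∧ ∃ f g : ℕ → ℕ,
      f ∈ seqsIn prev ∧ g ∈ seqsIn prev ∧ res f x.length = x ∧ res g x.length = x ∧
      f ∈ S ∧ g ∉ S})
    (fun _ _ ih => ⋂ (β : Ordinal.{0}) (h : β < _), ih β h)

/-- Wadge's remainder `Rm_μ(A,B)`. -/
noncomputable def Rm (A B : Set (ℕ → ℕ)) (μ : Ordinal.{0}) : Set (ℕ → ℕ) :=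
  if μ = 0 then Set.univ
  else ⋂ (ν : {ν : Ordinal.{0} // ν < μ}),
    closure (Rm A B ν.1 ∩ A) ∩ closure (Rm A B ν.1 ∩ B)
termination_by μ
decreasing_by exact ν.2

/-- The least ordinal at which the simplified remainders stabilize. -/
noncomputable def alphaS (S : Set (ℕ → ℕ)) : Ordinal.{0} :=
  sInf {α | SRem S α = SRem S (α + 1)}

/-- `S_∞`, the stable value of the simplified remainders. -/
noncomputable def Sinf (S : Set (ℕ → ℕ)) : Set (List ℕ) := SRem S (alphaS S)

/-- `β(σ)`: the least ordinal `γ` with `σ ∉ S_γ`. -/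
noncomputable def betaOf (S : Set (ℕ → ℕ)) (σ : List ℕ) : Ordinal.{0} :=
  sInf {γ | σ ∉ SRem S γ}

/-- `G` guesses `S`. -/
def Guesses (G : List ℕ → Bool) (S : Set (ℕ → ℕ)) : Prop :=
  ∀ f : ℕ → ℕ, ∀ᶠ n in atTop, (G (res f n) = true ↔ f ∈ S)

def Guessable (S : Set (ℕ → ℕ)) : Prop := ∃ G, Guesses G S

/-- `G, H` witness that `S` is guessable with `< α` mind changes. -/
def WitnessMC (S : Set (ℕ → ℕ)) (α : Ordinal.{0}) (G : List ℕ → Bool)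
    (H : List ℕ → Ordinal.{0}) : Prop :=
  Guesses G S ∧ (∀ σ, H σ < α) ∧
  (∀ (f : ℕ → ℕ) (n : ℕ), H (res f (n + 1)) ≤ H (res f n)) ∧
  (∀ (f : ℕ → ℕ) (n : ℕ), G (res f (n + 1)) ≠ G (res f n) →
    H (res f (n + 1)) < H (res f n))

def GuessableMC (S : Set (ℕ → ℕ)) (α : Ordinal.{0}) : Prop := ∃ G H, WitnessMC S α G H

/-- An ordinal is even if it is of the form `λ + n` with `λ` limit or zero and `n` even. -/
def OrdEven (o : Ordinal.{0}) : Prop :=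
  ∃ (l : Ordinal.{0}) (n : ℕ), (l = 0 ∨ Order.IsSuccLimit l) ∧ o = l + n ∧ Even n

/-- The Hausdorff difference set `D_α((A_η)_{η<α})`. -/
def DSet (α : Ordinal.{0}) (A : Ordinal.{0} → Set (ℕ → ℕ)) : Set (ℕ → ℕ) :=
  {x | ∃ η, η < α ∧ x ∈ A η ∧ (∀ η', η' < η → x ∉ A η') ∧ (OrdEven η ↔ ¬ OrdEven α)}

/-- Membership in the class `D_α(Σ⁰₁)`. -/
def InDiff (α : Ordinal.{0}) (S : Set (ℕ → ℕ)) : Prop :=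
  ∃ A : Ordinal.{0} → Set (ℕ → ℕ), (∀ η, η < α → IsOpen (A η)) ∧
    (∀ η η', η ≤ η' → η' < α → A η ⊆ A η') ∧ S = DSet α A
/-- Wadge's `Rm_Ω(S)`: the stable value of `Rm_μ(S, Sᶜ)`. -/
noncomputable def RmInf (S : Set (ℕ → ℕ)) : Set (ℕ → ℕ) :=
  Rm S Sᶜ (sInf {μ : Ordinal.{0} | Rm S Sᶜ μ = Rm S Sᶜ (μ + 1)})

/-- The canonical guesser `G_S`. -/
noncomputable def GS (S : Set (ℕ → ℕ)) (σ : List ℕ) : Bool :=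
  if (∃ f : ℕ → ℕ, res f σ.length = σ ∧ f ∈ seqsIn (SRem S (betaOf S σ - 1))) then
    decide (∃ f : ℕ → ℕ, res f σ.length = σ ∧ f ∈ seqsIn (SRem S (betaOf S σ - 1)) ∧ f ∈ S)
  else if h : σ = [] then false
  else GS S σ.dropLast
termination_by σ.length
decreasing_by
  simp only [List.length_dropLast]
  exact Nat.sub_lt (List.length_pos_iff.mpr h) one_pos

/-- `S` is `F_σ`: a countable union of closed sets. -/
def IsFsigma (S : Set (ℕ → ℕ)) : Prop :=
  ∃ C : ℕ → Set (ℕ → ℕ), (∀ n, IsClosed (C n)) ∧ S = ⋃ n, C n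

/-- Boolean combinations of open sets. -/
inductive BoolComb : Set (ℕ → ℕ) → Prop
  | isOpen {s : Set (ℕ → ℕ)} : IsOpen s → BoolComb s
  | compl {s : Set (ℕ → ℕ)} : BoolComb s → BoolComb sᶜ
  | union {s t : Set (ℕ → ℕ)} : BoolComb s → BoolComb t → BoolComb (s ∪ t)

/-- The Borel class `Σ⁰_α` on Baire space (for `α ≥ 1`). -/
noncomputable def Sigma0 (α : Ordinal.{0}) : Set (Set (ℕ → ℕ)) :=
  if α = 1 then {s | IsOpen s}
  else {s | ∃ g : ℕ → Set (ℕ → ℕ), s = ⋃ n, g n ∧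
    ∀ n, ∃ β : {β : Ordinal.{0} // β < α}, 1 ≤ β.1 ∧ (g n)ᶜ ∈ Sigma0 β.1}
termination_by α
decreasing_by exact β.2

/-- The ambiguous Borel class `Δ⁰_α`. -/
noncomputable def Delta0 (α : Ordinal.{0}) : Set (Set (ℕ → ℕ)) :=
  {s | s ∈ Sigma0 α ∧ sᶜ ∈ Sigma0 α}

/-- The Boolean characteristic function. -/
noncomputable def chi (X : Set (ℕ → ℕ)) (f : ℕ → ℕ) : Bool := decide (f ∈ X)

/-- `G` guesses `S` based on the sequence of sets `Ss`. -/
def GuessesBased (G : List Bool → Bool) (Ss : ℕ → Set (ℕ → ℕ)) (S : Set (ℕ → ℕ)) : Prop :=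
  ∀ f : ℕ → ℕ, ∀ᶠ n in atTop,
    (G (List.ofFn (fun i : Fin n => chi (Ss i) f)) = true ↔ f ∈ S)

/-- `S` is `μ`th-order guessable. -/
def HigherGuessable (μ : Ordinal.{0}) (S : Set (ℕ → ℕ)) : Prop :=
  ∃ Ss : ℕ → Set (ℕ → ℕ), (∀ i, ∃ μi, μi < μ ∧ Ss i ∈ Delta0 (μi + 1)) ∧
    ∃ G : List Bool → Bool, GuessesBased G Ss S

/-! If `G` guesses `S`, then the stable remainder `S_∞` has the property that every node in it
extends, inside `[S_∞]`, both to a branch in `S` and to a branch outside `S`. Following such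
extensions, one can lengthen any node of `S_∞` to one on which `G` changes its guess, again and
again; the limit branch `f` then makes `G` change its mind infinitely often, contradicting
`G (f↾n) → χ_S f`. Hence `S_∞` has no nodes. -/

lemma res_length (f : ℕ → ℕ) (n : ℕ) : (res f n).length = n := by simp [res]

lemma res_prefix (f : ℕ → ℕ) {m n : ℕ} (h : m ≤ n) : res f m <+: res f n := by
  have : res f m = (res f n).take m :=
    List.ext_getElem (by simp [res, h]) fun i _ _ => by simp [res]
  exact this ▸ List.take_prefix _ _

lemma res_eq_of_forall_getElem {f : ℕ → ℕ} {σ : List ℕ}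
    (h : ∀ i (hi : i < σ.length), f i = σ[i]) : res f σ.length = σ :=
  List.ext_getElem (res_length f _) fun i _ hi => by simp [res, h i hi]

lemma exists_res_eq_of_prefix_chain {s : ℕ → List ℕ} (hpre : ∀ k, s k <+: s (k + 1))
    (hlen : ∀ k, (s k).length < (s (k + 1)).length) :
    ∃ f : ℕ → ℕ, ∀ k, res f (s k).length = s k := by
  have hchain : ∀ {j k}, j ≤ k → s j <+: s k := fun hjk => by
    induction hjk with
    | refl => exact List.prefix_refl _
    | step _ ih => exact ih.trans (hpre _)
  have hlen_ge : ∀ k, k ≤ (s k).length := fun k => by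
    induction k with
    | zero => exact Nat.zero_le _
    | succ k ih => exact ih.trans_lt (hlen k)
  refine ⟨fun n => (s (n + 1)).getD n 0, fun k => res_eq_of_forall_getElem fun i hi => ?_⟩
  rw [List.getD_eq_getElem _ _ (hlen_ge (i + 1))]
  rcases le_total (i + 1) k with h | h
  · exact (hchain h).getElem _
  · exact ((hchain h).getElem hi).symm

lemma Guesses.exists_gt_guess_eq {G : List ℕ → Bool} {S : Set (ℕ → ℕ)} (hG : Guesses G S)
    (f : ℕ → ℕ) (n : ℕ) : ∃ m, n < m ∧ (G (res f m) = true ↔ f ∈ S) :=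
  (((hG f).and (eventually_gt_atTop n)).exists).imp fun _ h => h.symm

lemma Guesses.eq_empty_of_forall_exists_guess_ne {G : List ℕ → Bool} {S : Set (ℕ → ℕ)}
    (hG : Guesses G S) {T : Set (List ℕ)}
    (hT : ∀ σ ∈ T, ∃ τ ∈ T, σ <+: τ ∧ σ.length < τ.length ∧ G τ ≠ G σ) : T = ∅ := by
  refine Set.eq_empty_iff_forall_notMem.mpr fun x hx => ?_
  choose next next_mem next_prefix next_length next_guess using
    fun σ : T => hT σ.1 σ.2
  let s : ℕ → T := fun k => Nat.rec ⟨x, hx⟩ (fun _ σ => ⟨next σ, next_mem σ⟩) k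
  obtain ⟨f, hf⟩ := exists_res_eq_of_prefix_chain (s := fun k => (s k).1)
    (fun k => next_prefix (s k)) (fun k => next_length (s k))
  obtain ⟨N, hN⟩ := eventually_atTop.mp (hG f)
  have hlen : ∀ k, k ≤ (s k).1.length := fun k => by
    induction k with
    | zero => exact Nat.zero_le _
    | succ k ih => exact ih.trans_lt (next_length (s k))
  have h₀ := hN _ (hlen N)
  have h₁ := hN _ ((Nat.le_succ N).trans (hlen (N + 1)))
  rw [hf N] at h₀
  rw [hf (N + 1)] at h₁
  exact next_guess (s N) (Bool.eq_iff_iff.mpr (h₁.trans h₀.symm))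

def IsSplitting (S : Set (ℕ → ℕ)) (T : Set (List ℕ)) : Prop :=
  ∀ σ ∈ T, ∃ f g : ℕ → ℕ, f ∈ seqsIn T ∧ g ∈ seqsIn T ∧
    res f σ.length = σ ∧ res g σ.length = σ ∧ f ∈ S ∧ g ∉ S

lemma IsSplitting.exists_guess_ne {G : List ℕ → Bool} {S : Set (ℕ → ℕ)} {T : Set (List ℕ)}
    (hT : IsSplitting S T) (hG : Guesses G S) {σ : List ℕ} (hσ : σ ∈ T) :
    ∃ τ ∈ T, σ <+: τ ∧ σ.length < τ.length ∧ G τ ≠ G σ := by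
  obtain ⟨f, g, hfT, hgT, hfσ, hgσ, hfS, hgS⟩ := hT σ hσ
  obtain ⟨h, hhT, hhσ, hh⟩ : ∃ h : ℕ → ℕ,
      h ∈ seqsIn T ∧ res h σ.length = σ ∧ (h ∈ S ↔ G σ = false) := by
    cases G σ
    · exact ⟨f, hfT, hfσ, by simpa using hfS⟩
    · exact ⟨g, hgT, hgσ, by simpa using hgS⟩
  obtain ⟨m, hσm, hm⟩ := hG.exists_gt_guess_eq h σ.length
  refine ⟨res h m, hhT m, hhσ ▸ res_prefix h hσm.le, (res_length h m).symm ▸ hσm, ?_⟩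
  cases hGσ : G σ <;> simp_all

section Remainders

variable (S : Set (ℕ → ℕ))

lemma SRem_succ (β : Ordinal.{0}) :
    SRem S (β + 1) = {x | x ∈ SRem S β ∧ ∃ f g : ℕ → ℕ,
      f ∈ seqsIn (SRem S β) ∧ g ∈ seqsIn (SRem S β) ∧ res f x.length = x ∧ res g x.length = x ∧
      f ∈ S ∧ g ∉ S} := by
  rw [SRem, Ordinal.limitRecOn_add_one]
  rfl

lemma SRem_limit {o : Ordinal.{0}} (ho : Order.IsSuccLimit o) :
    SRem S o = ⋂ β < o, SRem S β := by
  rw [SRem, Ordinal.limitRecOn_limit _ _ _ _ ho]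
  rfl

lemma SRem_succ_subset (β : Ordinal.{0}) : SRem S (β + 1) ⊆ SRem S β := by
  rw [SRem_succ]
  exact fun _ hx => hx.1

lemma SRem_antitone : Antitone (SRem S) := by
  intro β γ hβγ
  induction γ using Ordinal.limitRecOn with
  | zero => rw [nonpos_iff_eq_zero.mp hβγ]
  | add_one γ ih =>
    rw [← Order.succ_eq_add_one] at hβγ ⊢
    rcases Order.le_succ_iff_eq_or_le.mp hβγ with rfl | h
    · rfl
    · exact (SRem_succ_subset S γ).trans (ih h)
  | limit γ hγ _ =>
    rcases hβγ.eq_or_lt with rfl | h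
    · rfl
    · rw [SRem_limit S hγ]
      exact Set.biInter_subset_of_mem h

/-- Otherwise `SRem S` would be strictly antitone, hence an injection of `Ordinal.{0}` into
`Set (List ℕ)`. -/
lemma exists_SRem_eq_SRem_succ : ∃ α, SRem S α = SRem S (α + 1) := by
  by_contra! hne
  have hanti : StrictAnti (SRem S) := fun β γ hβγ =>
    (SRem_antitone S (Order.add_one_le_of_lt hβγ)).trans_lt
      ((SRem_succ_subset S β).ssubset_of_ne (hne β).symm)
  exact not_injective_of_ordinal _ hanti.injective

lemma SRem_alphaS_succ : SRem S (alphaS S + 1) = Sinf S :=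
  (csInf_mem (exists_SRem_eq_SRem_succ S)).symm

lemma isSplitting_Sinf : IsSplitting S (Sinf S) := fun σ hσ => by
  rw [← SRem_alphaS_succ, SRem_succ] at hσ
  exact hσ.2

end Remainders

theorem stmt1 (S : Set (ℕ → ℕ)) (hS : Guessable S) :
    Sinf S = ∅ ∧ ∃ α : Ordinal.{0}, SRem S α = ∅ := by
  obtain ⟨G, hG⟩ := hS
  have hempty : Sinf S = ∅ :=
    hG.eq_empty_of_forall_exists_guess_ne fun _ hσ => (isSplitting_Sinf S).exists_guess_ne hG hσ
  exact ⟨hempty, alphaS S, hempty⟩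
end

section
/- Suppose G : ℕ^{<ℕ} → {0,1} and H : ℕ^{<ℕ} → α+1 witness that S is guessable with fewer than α+1 mind changes, and G(∅) = 0. Then S ∈ D_α(Σ⁰₁), i.e., S = D_α((A_η)_{η<α}) for some increasing sequence of open sets A_η. -/
open Filter Topology Classical

/-
Along each `f` the ordinal `H (f↾n)` stabilizes, and since `G` changes its guess only when `H`
drops strictly, so does the guess, at the correct value. Raise `H σ` by at most one to the
ordinal `ρ σ` whose parity is opposite to that of `α` exactly when `G σ = 1`; a strict drop of
`H` absorbs this shift, so `ρ` never increases along `f`. With `A_η = {f | ρ (f↾n) ≤ η for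
some n}`, open and increasing in `η`, the least `η` with `f ∈ A_η` is the eventual value `ρ∞`
of `ρ` along `f`, so `f ∈ D_α(A)` iff `ρ∞ < α` and the eventual guess is `1`. When that guess
is `1`, the assumption `G ∅ = 0` forces a mind change, so `H` drops below `H ∅ ≤ α`; then
`ρ∞ ≤ α`, and `ρ∞ = α` is excluded by parity.
-/

open Ordinal

lemma Ordinal.eq_zero_or_isSuccLimit_iff_omega0_dvd {l : Ordinal} :
    l = 0 ∨ Order.IsSuccLimit l ↔ ω ∣ l := by
  rcases eq_or_ne l 0 with rfl | hl
  · simp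
  · simp [hl, isSuccLimit_iff, isSuccPrelimit_iff_omega0_dvd]

lemma Ordinal.add_natCast_mod_omega0 {l : Ordinal} (hl : ω ∣ l) (n : ℕ) :
    (l + n) % ω = n := by
  obtain ⟨k, rfl⟩ := hl
  rw [mul_add_mod_self, mod_eq_of_lt (natCast_lt_omega0 n)]

lemma ordEven_add_natCast {l : Ordinal.{0}} (hl : ω ∣ l) (n : ℕ) :
    OrdEven (l + n) ↔ Even n := by
  constructor
  · rintro ⟨l', n', hl', h, hn'⟩
    have hmod := congrArg (· % ω) h
    simp only [add_natCast_mod_omega0 hl,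
      add_natCast_mod_omega0 (eq_zero_or_isSuccLimit_iff_omega0_dvd.1 hl'), Nat.cast_inj] at hmod
    exact hmod ▸ hn'
  · exact fun hn => ⟨l, n, eq_zero_or_isSuccLimit_iff_omega0_dvd.2 hl, rfl, hn⟩

lemma ordEven_add_one (o : Ordinal.{0}) : OrdEven (o + 1) ↔ ¬OrdEven o := by
  obtain ⟨n, hn⟩ := lt_omega0.1 (mod_lt o omega0_ne_zero)
  have ho : o = ω * (o / ω) + n := by rw [← hn, div_add_mod]
  have hdvd : ω ∣ ω * (o / ω) := dvd_mul_right _ _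
  rw [ho, add_assoc, ← Nat.cast_add_one, ordEven_add_natCast hdvd, ordEven_add_natCast hdvd,
    Nat.even_add_one]

noncomputable def parityLift (p : Prop) (o : Ordinal.{0}) : Ordinal.{0} :=
  if OrdEven o ↔ p then o else o + 1

section parityLift

variable {p q : Prop} {o o' : Ordinal.{0}}

lemma le_parityLift : o ≤ parityLift p o := by
  unfold parityLift; split_ifs
  exacts [le_rfl, le_self_add]

lemma parityLift_le_add_one : parityLift p o ≤ o + 1 := by
  unfold parityLift; split_ifs
  exacts [le_self_add, le_rfl]

lemma ordEven_parityLift : OrdEven (parityLift p o) ↔ p := by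
  unfold parityLift; split_ifs with h
  · exact h
  · rw [ordEven_add_one]; tauto

lemma parityLift_le_of_lt (h : o < o') : parityLift p o ≤ parityLift q o' :=
  parityLift_le_add_one.trans ((Order.add_one_le_iff.2 h).trans le_parityLift)

lemma parityLift_lt_of_lt {α : Ordinal.{0}} (h : o < α) (hp : p ↔ ¬OrdEven α) :
    parityLift p o < α := by
  refine (parityLift_le_add_one.trans (Order.add_one_le_iff.2 h)).lt_of_ne fun he => ?_
  have := ordEven_parityLift (p := p) (o := o)
  rw [he] at this
  tauto

end parityLift

section MindChanges

variable {β : Type*} [LinearOrder β] {h : ℕ → β} {g : ℕ → Bool}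

lemma eventually_forall_ge_eq_of_antitone [WellFoundedLT β] (hh : Antitone h)
    (hg : ∀ n, g (n + 1) ≠ g n → h (n + 1) < h n) :
    ∀ᶠ N in atTop, ∀ n ≥ N, h n = h N ∧ g n = g N := by
  obtain ⟨N₀, hN₀⟩ := WellFoundedLT.antitone_chain_condition hh
  have hgconst : ∀ n ≥ N₀, g n = g N₀ := by
    intro n hn
    induction n, hn using Nat.le_induction with
    | base => rfl
    | succ n hn ih =>
      by_contra hne
      have := hg n (fun h' => hne (h'.trans ih))
      rw [← hN₀ n hn, ← hN₀ (n + 1) (by omega)] at this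
      exact this.false
  filter_upwards [eventually_ge_atTop N₀] with N hN n hn
  exact ⟨(hN₀ n (hN.trans hn)).symm.trans (hN₀ N hN),
    (hgconst n (hN.trans hn)).trans (hgconst N hN).symm⟩

lemma lt_apply_zero_of_ne (hh : Antitone h) (hg : ∀ n, g (n + 1) ≠ g n → h (n + 1) < h n) :
    ∀ {n}, g n ≠ g 0 → h n < h 0
  | 0, hne => (hne rfl).elim
  | n + 1, hne => by
    by_cases hgn : g (n + 1) = g n
    · exact (hh n.le_succ).trans_lt (lt_apply_zero_of_ne hh hg (hgn ▸ hne))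
    · exact (hg n hgn).trans_le (hh (Nat.zero_le n))

lemma antitone_parityLift {h : ℕ → Ordinal.{0}} (P : Bool → Prop) (hh : Antitone h)
    (hg : ∀ n, g (n + 1) ≠ g n → h (n + 1) < h n) :
    Antitone fun n => parityLift (P (g n)) (h n) := by
  refine antitone_nat_of_succ_le fun n => ?_
  by_cases hgn : g (n + 1) = g n
  · rcases (hh n.le_succ).lt_or_eq with hlt | heq
    · exact parityLift_le_of_lt hlt
    · rw [hgn, heq]
  · exact parityLift_le_of_lt (hg n hgn)

end MindChanges

lemma exists_le_iff_of_antitone {β : Type*} [Preorder β] {r : ℕ → β} {N : ℕ}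
    (hr : Antitone r) (hN : ∀ n ≥ N, r n = r N) (b : β) :
    (∃ n, r n ≤ b) ↔ r N ≤ b := by
  refine ⟨fun ⟨n, hn⟩ => ?_, fun hb => ⟨N, hb⟩⟩
  rcases le_total n N with hnN | hNn
  · exact (hr hnN).trans hn
  · exact (hN n hNn).ge.trans hn

lemma isOpen_setOf_exists_res_mem (U : Set (List ℕ)) : IsOpen {f | ∃ n, res f n ∈ U} := by
  simp only [Set.ofPred_exists]
  refine isOpen_iUnion fun n => ?_
  have hc : Continuous fun (f : ℕ → ℕ) (i : Fin n) => f i :=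
    continuous_pi fun i => continuous_apply _
  exact (isOpen_discrete {v : Fin n → ℕ | List.ofFn v ∈ U}).preimage hc

lemma mem_DSet_iff {α ρ : Ordinal.{0}} {A : Ordinal.{0} → Set (ℕ → ℕ)} {f : ℕ → ℕ}
    (hA : ∀ η, f ∈ A η ↔ ρ ≤ η) :
    f ∈ DSet α A ↔ ρ < α ∧ (OrdEven ρ ↔ ¬OrdEven α) := by
  constructor
  · rintro ⟨η, hηα, hη, hmin, hpar⟩
    obtain rfl : η = ρ :=
      le_antisymm (not_lt.1 fun hlt => hmin ρ hlt ((hA ρ).2 le_rfl)) ((hA η).1 hη)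
    exact ⟨hηα, hpar⟩
  · rintro ⟨hρα, hpar⟩
    exact ⟨ρ, hρα, (hA ρ).2 le_rfl, fun η' hη' hmem => hη'.not_ge ((hA η').1 hmem),
      hpar⟩

theorem stmt12 (S : Set (ℕ → ℕ)) (α : Ordinal.{0}) (G : List ℕ → Bool)
    (H : List ℕ → Ordinal.{0}) (hW : WitnessMC S (α + 1) G H) (hG : G [] = false) :
    InDiff α S := by
  obtain ⟨hguess, hHlt, hHstep, hHdrop⟩ := hW
  set P : Bool → Prop := fun b => b = true ↔ ¬OrdEven α
  set ρ : List ℕ → Ordinal.{0} := fun σ => parityLift (P (G σ)) (H σ)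
  set A : Ordinal.{0} → Set (ℕ → ℕ) := fun η => {f | ∃ n, ρ (res f n) ≤ η}
  refine ⟨A, fun η _ => isOpen_setOf_exists_res_mem {σ | ρ σ ≤ η},
    fun η η' hle _ f ⟨n, hn⟩ => ⟨n, hn.trans hle⟩, ?_⟩
  ext f
  set h : ℕ → Ordinal.{0} := fun n => H (res f n)
  set g : ℕ → Bool := fun n => G (res f n)
  have hh : Antitone h := antitone_nat_of_succ_le (hHstep f)
  have hg : ∀ n, g (n + 1) ≠ g n → h (n + 1) < h n := hHdrop f
  obtain ⟨N, hstable, hguessN⟩ :=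
    ((eventually_forall_ge_eq_of_antitone hh hg).and (hguess f)).exists
  have hρf : ∀ η, f ∈ A η ↔ ρ (res f N) ≤ η :=
    exists_le_iff_of_antitone (antitone_parityLift P hh hg) fun n hn => by
      show parityLift (P (g n)) (h n) = parityLift (P (g N)) (h N)
      rw [(hstable n hn).1, (hstable n hn).2]
  rw [mem_DSet_iff hρf, ordEven_parityLift, ← hguessN]
  constructor
  · intro hGN
    have hHN : H (res f N) < α :=
      (lt_apply_zero_of_ne hh hg (show G (res f N) ≠ G [] by simp [hGN, hG])).trans_le
        (Order.lt_add_one_iff.1 (hHlt _))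
    exact ⟨parityLift_lt_of_lt hHN (by simp [P, hGN]), by simp [P, hGN]⟩
  · rintro ⟨-, hpar⟩
    simp only [P] at hpar
    tauto
end
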